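/- If N ≥ 0 is an even integer, then FSh₂(N) = {0}, i.e. the only rational function in the Fay-shuffle space of weight N is the zero function. -/

import Mathlib

noncomputable section

open MvPolynomial

/-- The polynomial ring `ℚ[X,Y]`, with `X = X 0` and `Y = X 1`. -/
abbrev R2 : Type := MvPolynomial (Fin 2) ℚ

/-- The field of rational functions `ℚ(X,Y)`. -/
abbrev K2 : Type := FractionRing R2

/-- The substitution `(X, Y) ↦ (X + Y, -Y)` on polynomials. -/
def fayA : R2 →ₐ[ℚ] R2 := aeval ![X 0 + X 1, -X 1]

/-- The substitution `(X, Y) ↦ (-X - Y, X)` on polynomials. -/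
def rotA : R2 →ₐ[ℚ] R2 := aeval ![-X 0 - X 1, X 0]

/-- The substitution `(X, Y) ↦ (Y, X)` on polynomials. -/
def swapA : R2 →ₐ[ℚ] R2 := aeval ![X 1, X 0]

lemma fayA_invol : fayA.comp fayA = AlgHom.id ℚ R2 := by
  apply algHom_ext
  intro i
  fin_cases i <;> simp [fayA]

lemma rotA_cube : rotA.comp (rotA.comp rotA) = AlgHom.id ℚ R2 := by
  apply algHom_ext
  intro i
  fin_cases i <;> simp [rotA]

lemma swapA_invol : swapA.comp swapA = AlgHom.id ℚ R2 := by
  apply algHom_ext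
  intro i
  fin_cases i <;> simp [swapA]

lemma fayA_inj : Function.Injective fayA :=
  Function.LeftInverse.injective (g := fayA) fun x => by
    simpa using DFunLike.congr_fun fayA_invol x

lemma rotA_inj : Function.Injective rotA :=
  Function.LeftInverse.injective (g := rotA.comp rotA) fun x => by
    simpa using DFunLike.congr_fun rotA_cube x

lemma swapA_inj : Function.Injective swapA :=
  Function.LeftInverse.injective (g := swapA) fun x => by
    simpa using DFunLike.congr_fun swapA_invol x

/-- Lift an injective substitution on `ℚ[X,Y]` to the fraction field `ℚ(X,Y)`. -/
def liftK (φ : R2 →ₐ[ℚ] R2) (hφ : Function.Injective φ) : K2 →+* K2 :=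
  IsFractionRing.lift (g := (algebraMap R2 K2).comp φ.toRingHom)
    (fun _ _ h => hφ (IsFractionRing.injective R2 K2 h))

/-- `P(X,Y) ↦ P(X+Y, -Y)` as a `ℚ`-linear endomorphism of `ℚ(X,Y)`. -/
def fayL : K2 →ₗ[ℚ] K2 :=
  { toFun := liftK fayA fayA_inj, map_add' := map_add _,
    map_smul' := fun c x => by simp only [RingHom.id_apply]; exact map_rat_smul (liftK fayA fayA_inj) c x }

/-- `P(X,Y) ↦ P(-X-Y, X)` as a `ℚ`-linear endomorphism of `ℚ(X,Y)`. -/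
def rotL : K2 →ₗ[ℚ] K2 :=
  { toFun := liftK rotA rotA_inj, map_add' := map_add _,
    map_smul' := fun c x => by simp only [RingHom.id_apply]; exact map_rat_smul (liftK rotA rotA_inj) c x }

/-- `P(X,Y) ↦ P(Y, X)` as a `ℚ`-linear endomorphism of `ℚ(X,Y)`. -/
def swapL : K2 →ₗ[ℚ] K2 :=
  { toFun := liftK swapA swapA_inj, map_add' := map_add _,
    map_smul' := fun c x => by simp only [RingHom.id_apply]; exact map_rat_smul (liftK swapA swapA_inj) c x }

/-- The inclusion `ℚ[X,Y] → ℚ(X,Y)` as a `ℚ`-linear map. -/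
def algL : R2 →ₗ[ℚ] K2 :=
  { toFun := algebraMap R2 K2, map_add' := map_add _,
    map_smul' := fun c x => by simp only [RingHom.id_apply]; exact map_rat_smul (algebraMap R2 K2) c x }

/-- The element `X·Y ∈ ℚ(X,Y)`. -/
def xyK : K2 := algebraMap R2 K2 (X 0 * X 1)

/-- The length-two Fay-shuffle space `FSh₂(N)`: rational functions `P(X,Y)`,
homogeneous of degree `N - 2` with at most simple poles along `X = 0` and `Y = 0`
and no other poles (equivalently, `X·Y·P` is a homogeneous polynomial of degree `N`),
satisfying the Fay relation `P(X,Y) + P(X+Y,-Y) + P(-X-Y,X) = 0` and the shuffle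
relation `P(X,Y) + P(Y,X) = 0`. -/
def FSh (N : ℕ) : Submodule ℚ K2 :=
  (Submodule.map algL (homogeneousSubmodule (Fin 2) ℚ N)).comap (LinearMap.mulLeft ℚ xyK)
    ⊓ LinearMap.ker (LinearMap.id + fayL + rotL)
    ⊓ LinearMap.ker (LinearMap.id + swapL)

/-! `Q := X·Y·P` is a polynomial, and clearing denominators in the Fay relation gives
`(X+Y)·Q(X,Y) = X·Q(X+Y,-Y) + Y·Q(-X-Y,X)`. Substituting `(X,Y) ↦ (X+Y,-Y)` into this identity
turns `Q(-X-Y,X)` into `Q(-X,X+Y)`, which equals `-Q(-X-Y,X)` because `Q` is antisymmetric and,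
being homogeneous of even degree, even. Comparing the two identities gives `2·Y·Q(-X-Y,X) = 0`,
hence `Q = 0` and `P = 0`. -/

theorem MvPolynomial.IsHomogeneous.aeval_C_mul_X {σ R : Type*} [CommSemiring R]
    {φ : MvPolynomial σ R} {n : ℕ} (hφ : φ.IsHomogeneous n) (c : R) :
    MvPolynomial.aeval (fun i => C c * X i) φ = C (c ^ n) * φ := by
  conv_lhs => rw [φ.as_sum]
  conv_rhs => rw [φ.as_sum]
  rw [map_sum, Finset.mul_sum]
  refine Finset.sum_congr rfl fun d hd => ?_
  have hdeg : d.degree = n := by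
    rw [Finsupp.degree_eq_weight_one]; exact hφ (mem_support_iff.mp hd)
  rw [aeval_monomial, monomial_eq, algebraMap_eq]
  simp only [Finsupp.prod, mul_pow, Finset.prod_mul_distrib, Finset.prod_pow_eq_pow_sum,
    ← Finsupp.degree_apply, hdeg, map_pow]
  ring

def negA : R2 →ₐ[ℚ] R2 := aeval fun i => -X i

theorem negA_eq_self_of_even {N : ℕ} (hN : Even N) {Q : R2}
    (hQ : Q ∈ homogeneousSubmodule (Fin 2) ℚ N) : negA Q = Q := by
  have h := IsHomogeneous.aeval_C_mul_X ((mem_homogeneousSubmodule N Q).mp hQ) (-1)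
  simpa [negA, hN.neg_one_pow] using h

@[simp] theorem fayA_X_zero : fayA (X 0) = X 0 + X 1 := by simp [fayA]

@[simp] theorem fayA_X_one : fayA (X 1) = -X 1 := by simp [fayA]

@[simp] theorem rotA_X_zero : rotA (X 0) = -X 0 - X 1 := by simp [rotA]

@[simp] theorem rotA_X_one : rotA (X 1) = X 0 := by simp [rotA]

@[simp] theorem swapA_X_zero : swapA (X 0) = X 1 := by simp [swapA]

@[simp] theorem swapA_X_one : swapA (X 1) = X 0 := by simp [swapA]

theorem fayA_comp_rotA : fayA.comp rotA = rotA.comp (swapA.comp negA) := by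
  apply algHom_ext
  intro i
  fin_cases i <;> simp [negA]; ring

theorem eq_zero_of_fay_of_swapA_of_negA {Q : R2}
    (hfay : (X 0 + X 1) * Q = X 0 * fayA Q + X 1 * rotA Q)
    (hswap : swapA Q = -Q) (hneg : negA Q = Q) : Q = 0 := by
  have hfay_rot : fayA (rotA Q) = -rotA Q := by
    rw [← AlgHom.comp_apply, fayA_comp_rotA]
    simp only [AlgHom.comp_apply, hneg, hswap, map_neg]
  have hfay_fay : fayA (fayA Q) = Q := DFunLike.congr_fun fayA_invol Q
  have hfay_subst := congrArg fayA hfay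
  simp only [map_add, map_mul, hfay_rot, hfay_fay, fayA_X_zero, fayA_X_one] at hfay_subst
  have hrot : (2 * X 1) * rotA Q = 0 := by linear_combination -hfay - hfay_subst
  have h2X1 : (2 * X 1 : R2) ≠ 0 := mul_ne_zero two_ne_zero (X_ne_zero 1)
  exact rotA_inj (by rw [(mul_eq_zero.mp hrot).resolve_left h2X1, map_zero])

theorem liftK_algebraMap (φ : R2 →ₐ[ℚ] R2) (hφ : Function.Injective φ) (p : R2) :
    liftK φ hφ (algebraMap R2 K2 p) = algebraMap R2 K2 (φ p) :=
  IsFractionRing.lift_algebraMap _ p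

theorem algebraMap_eq_mul_liftK {φ : R2 →ₐ[ℚ] R2} (hφ : Function.Injective φ) {P : K2} {Q : R2}
    (hQ : algebraMap R2 K2 Q = xyK * P) :
    algebraMap R2 K2 (φ Q) = algebraMap R2 K2 (φ (X 0 * X 1)) * liftK φ hφ P := by
  rw [← liftK_algebraMap, ← liftK_algebraMap, hQ, xyK, map_mul]

theorem polynomial_fay_of_fay {P : K2} {Q : R2} (hQ : algebraMap R2 K2 Q = xyK * P)
    (hP : P + fayL P + rotL P = 0) :
    (X 0 + X 1) * Q = X 0 * fayA Q + X 1 * rotA Q := by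
  apply IsFractionRing.injective R2 K2
  have hF := algebraMap_eq_mul_liftK fayA_inj hQ
  have hR := algebraMap_eq_mul_liftK rotA_inj hQ
  simp only [map_mul, fayA_X_zero, fayA_X_one, rotA_X_zero, rotA_X_one] at hF hR
  have hP' : P + liftK fayA fayA_inj P + liftK rotA rotA_inj P = 0 := hP
  simp only [map_add, map_mul, hF, hR, hQ, xyK, map_neg, map_sub]
  set x := algebraMap R2 K2 (X 0)
  set y := algebraMap R2 K2 (X 1)
  linear_combination (x + y) * x * y * hP'

theorem swapA_eq_neg_of_shuffle {P : K2} {Q : R2} (hQ : algebraMap R2 K2 Q = xyK * P)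
    (hP : P + swapL P = 0) : swapA Q = -Q := by
  apply IsFractionRing.injective R2 K2
  have hS := algebraMap_eq_mul_liftK swapA_inj hQ
  simp only [map_mul, swapA_X_zero, swapA_X_one] at hS
  have hP' : P + liftK swapA swapA_inj P = 0 := hP
  rw [hS, map_neg, hQ, xyK, map_mul]
  linear_combination algebraMap R2 K2 (X 0) * algebraMap R2 K2 (X 1) * hP'

theorem xyK_ne_zero : xyK ≠ 0 := by
  simp [xyK, X_ne_zero]

/-- If `N` is even, then the only element of the Fay-shuffle space `FSh₂(N)` is `0`. -/
theorem FSh_even_eq_bot (N : ℕ) (hN : Even N) : FSh N = ⊥ := by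
  refine eq_bot_iff.mpr fun P ⟨⟨⟨Q, hQN, hQ⟩, hfay⟩, hswap⟩ => ?_
  have hQ0 : Q = 0 := eq_zero_of_fay_of_swapA_of_negA (polynomial_fay_of_fay hQ hfay)
    (swapA_eq_neg_of_shuffle hQ hswap) (negA_eq_self_of_even hN hQN)
  have hxyP : xyK * P = 0 := by simpa [algL, hQ0] using hQ.symm
  exact (Submodule.mem_bot ℚ).mpr ((mul_eq_zero.mp hxyP).resolve_left xyK_ne_zero)
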